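/- Let R be a PF-ring and e an idempotent element of R. Then the amalgamated duplication R ⋈ Re is a PF-ring. -/

import Mathlib

/-- The amalgamated duplication `R ⋈ I` as a subring of `R × R`. -/
def Ideal.duplication {R : Type*} [CommRing R] (I : Ideal R) : Subring (R × R) where
  carrier := {p | p.2 - p.1 ∈ I}
  zero_mem' := by simp
  one_mem' := by simp
  add_mem' := by
    intro a b ha hb
    show (a + b).2 - (a + b).1 ∈ I
    convert I.add_mem ha hb using 1
    simp only [Prod.fst_add, Prod.snd_add]; ring
  neg_mem' := by
    intro a ha
    show (-a).2 - (-a).1 ∈ I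
    convert I.neg_mem ha using 1
    simp only [Prod.fst_neg, Prod.snd_neg]; ring
  mul_mem' := by
    intro a b ha hb
    show (a * b).2 - (a * b).1 ∈ I
    have : (a * b).2 - (a * b).1 = a.2 * (b.2 - b.1) + b.1 * (a.2 - a.1) := by
      simp only [Prod.fst_mul, Prod.snd_mul]; ring
    rw [this]
    exact I.add_mem (I.mul_mem_left _ hb) (I.mul_mem_left _ ha)

/-- The diagonal embedding `R →+* R ⋈ I`. -/
def Ideal.duplicationDiag {R : Type*} [CommRing R] (I : Ideal R) : R →+* I.duplication where
  toFun r := ⟨(r, r), by show r - r ∈ I; simp⟩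
  map_one' := rfl
  map_mul' _ _ := rfl
  map_zero' := rfl
  map_add' _ _ := rfl

/-- A commutative ring is a PF-ring if every principal ideal is flat. -/
def IsPFRing (R : Type*) [CommRing R] : Prop :=
  ∀ a : R, Module.Flat R (Ideal.span {a})

/-!
A ring is PF exactly when `s * x = 0` always yields some `α` with `α * s = 0` and `α * x = x`
(the equational criterion for flatness of `(x)`). Given `s * x = 0` in `R ⋈ Re`, this criterion
in `R` applied to each coordinate gives `a` and `g`. As `1 - e` annihilates `Re`, every `p` in
`R ⋈ Re` satisfies `(1 - e) * p.2 = (1 - e) * p.1`, and then `(a, e * g + (1 - e) * a)`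
is an element of `R ⋈ Re` that works for `s` and `x`.
-/

theorem exists_mul_eq_zero_and_mul_eq_self_of_flat {R : Type*} [CommRing R] {s x : R}
    [Module.Flat R (Ideal.span {x})] (hsx : s * x = 0) : ∃ α, α * s = 0 ∧ α * x = x := by
  let x' : Ideal.span {x} := ⟨x, Ideal.mem_span_singleton_self x⟩
  have hrel : ∑ _i : Unit, s • x' = 0 := Subtype.ext <| by simp [x', hsx]
  obtain ⟨k, a, y, hx', ha⟩ := Module.Flat.isTrivialRelation_of_sum_smul_eq_zero hrel
  choose r hr using fun j => Ideal.mem_span_singleton'.mp (y j).2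
  refine ⟨∑ j, a () j * r j, ?_, ?_⟩
  · calc (∑ j, a () j * r j) * s = ∑ j, r j * (s * a () j) := by
          rw [Finset.sum_mul]; exact Finset.sum_congr rfl fun _ _ => by ring
      _ = 0 := Finset.sum_eq_zero fun j _ => by simpa using congrArg (r j * ·) (ha j)
  · calc (∑ j, a () j * r j) * x = ∑ j, a () j * y j := by
          rw [Finset.sum_mul]; exact Finset.sum_congr rfl fun j _ => by rw [← hr j, mul_assoc]
      _ = x := by simpa using (congrArg Subtype.val (hx' ())).symm

theorem flat_span_singleton_of_forall_exists {R : Type*} [CommRing R] {x : R}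
    (h : ∀ s, s * x = 0 → ∃ α, α * s = 0 ∧ α * x = x) : Module.Flat R (Ideal.span {x}) := by
  refine Module.Flat.of_forall_isTrivialRelation fun {l} {f} {m} hfm => ?_
  choose r hr using fun i => Ideal.mem_span_singleton'.mp (m i).2
  have hfr : (∑ i, f i * r i) * x = 0 := by
    simpa [Finset.sum_mul, ← hr, mul_assoc] using congrArg Subtype.val hfm
  obtain ⟨α, hαs, hαx⟩ := h _ hfr
  refine ⟨1, fun i _ => r i * α, fun _ => ⟨x, Ideal.mem_span_singleton_self x⟩, fun i => ?_,
    fun _ => ?_⟩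
  · ext
    simp [← hr i, mul_assoc, hαx]
  · rw [← hαs, Finset.mul_sum]
    exact Finset.sum_congr rfl fun _ _ => by ring

theorem isPFRing_iff {R : Type*} [CommRing R] :
    IsPFRing R ↔ ∀ s x : R, s * x = 0 → ∃ α, α * s = 0 ∧ α * x = x :=
  ⟨fun h _ x hsx => have := h x; exists_mul_eq_zero_and_mul_eq_self_of_flat hsx,
    fun h _ => flat_span_singleton_of_forall_exists (h · _)⟩

theorem Ideal.mem_duplication {R : Type*} [CommRing R] {I : Ideal R} {p : R × R} :
    p ∈ I.duplication ↔ p.2 - p.1 ∈ I := Iff.rfl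

theorem IsIdempotentElem.one_sub_mul_eq_zero_of_mem_span {R : Type*} [CommRing R] {e x : R}
    (he : IsIdempotentElem e) (hx : x ∈ Ideal.span {e}) : (1 - e) * x = 0 := by
  obtain ⟨c, rfl⟩ := Ideal.mem_span_singleton'.mp hx
  rw [mul_left_comm, he.one_sub_mul_self, mul_zero]

theorem IsIdempotentElem.one_sub_mul_snd_eq_of_mem_duplication {R : Type*} [CommRing R] {e : R}
    (he : IsIdempotentElem e) {p : R × R} (hp : p ∈ (Ideal.span {e}).duplication) :
    (1 - e) * p.2 = (1 - e) * p.1 := by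
  rw [← sub_eq_zero, ← mul_sub]
  exact he.one_sub_mul_eq_zero_of_mem_span (Ideal.mem_duplication.mp hp)

theorem duplication_idempotent_isPFRing (R : Type*) [CommRing R] (hR : IsPFRing R)
    (e : R) (he : IsIdempotentElem e) : IsPFRing (Ideal.span {e}).duplication := by
  rw [isPFRing_iff] at hR ⊢
  rintro ⟨s, hs⟩ ⟨x, hx⟩ hsx
  obtain ⟨hsx₁, hsx₂⟩ := Prod.ext_iff.mp (congrArg Subtype.val hsx)
  obtain ⟨a, has, hax⟩ := hR _ _ hsx₁
  obtain ⟨g, hgs, hgx⟩ := hR _ _ hsx₂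
  have hs' := he.one_sub_mul_snd_eq_of_mem_duplication hs
  have hx' := he.one_sub_mul_snd_eq_of_mem_duplication hx
  -- `α` agrees with `a` off the support of `e` and with `g` on it.
  have hα : (a, e * g + (1 - e) * a) ∈ (Ideal.span {e}).duplication :=
    Ideal.mem_duplication.mpr (Ideal.mem_span_singleton'.mpr ⟨g - a, by ring⟩)
  refine ⟨⟨_, hα⟩, Subtype.ext (Prod.ext has ?_), Subtype.ext (Prod.ext hax ?_)⟩
  · change (e * g + (1 - e) * a) * s.2 = 0
    linear_combination e * hgs + a * hs' + (1 - e) * has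
  · change (e * g + (1 - e) * a) * x.2 = x.2
    linear_combination e * hgx + (a - 1) * hx' + (1 - e) * hax
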